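/- Let f : 𝒫₂(ℝ^k) → ℝ be W₂-Lipschitz with constant C, and let ξ, η ∈ L²(𝒫) satisfy sup_{P∈𝒫} ∫_{{|ξ|+|η| ≥ N}} (|ξ|² + |η|²) dP → 0 as N → ∞. Then Γ(𝒫^f_{ξ+εη}, 𝒫^f_{ξ}) → 0 as ε ↓ 0. -/

import Mathlib

open MeasureTheory Filter Topology Set

noncomputable section

variable {Ω : Type*} [MeasurableSpace Ω] [TopologicalSpace Ω]

/-- A Borel map `ξ : Ω → E` belongs to `L²(𝒮)`: it is square integrable w.r.t. every `P ∈ 𝒮`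
and approximable, uniformly over `𝒮` in `L²`-norm, by bounded continuous functions. -/
def MemL2 (𝒮 : Set (ProbabilityMeasure Ω)) {E : Type*} [MeasurableSpace E]
    [NormedAddCommGroup E] (ξ : Ω → E) : Prop :=
  Measurable ξ ∧ (∀ P ∈ 𝒮, Integrable (fun ω => ‖ξ ω‖ ^ 2) (P : Measure Ω)) ∧
    ∀ δ : ℝ, 0 < δ → ∃ θ : BoundedContinuousFunction Ω E,
      ∀ P ∈ 𝒮, ∫ ω, ‖ξ ω - θ ω‖ ^ 2 ∂(P : Measure Ω) ≤ δ ^ 2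

/-- `f` is `W₂`-Lipschitz with constant `C`: for every probability coupling `ρ` on `E × E`
whose marginals have finite second moments, `|f(μ) − f(ν)| ≤ C (∫ |x−y|² ρ(dx,dy))^{1/2}`. -/
def W2Lipschitz {E : Type*} [MeasurableSpace E] [NormedAddCommGroup E]
    (f : Measure E → ℝ) (C : ℝ) : Prop :=
  ∀ ρ : Measure (E × E), IsProbabilityMeasure ρ →
    Integrable (fun p => ‖p.1‖ ^ 2) ρ → Integrable (fun p => ‖p.2‖ ^ 2) ρ →
    |f (ρ.map Prod.fst) - f (ρ.map Prod.snd)| ≤ C * Real.sqrt (∫ p, ‖p.1 - p.2‖ ^ 2 ∂ρ)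

/-- `F_f(ξ) = sup_{P ∈ 𝒮} f(P ∘ ξ⁻¹)`. -/
def Ff (𝒮 : Set (ProbabilityMeasure Ω)) {E : Type*} [MeasurableSpace E]
    (f : Measure E → ℝ) (ξ : Ω → E) : ℝ :=
  ⨆ P : 𝒮, f (((P : ProbabilityMeasure Ω) : Measure Ω).map ξ)

/-- `𝒫^f_{ξ} = {P ∈ 𝒮 : f(P ∘ ξ⁻¹) = F_f(ξ)}`. -/
def maximizersF (𝒮 : Set (ProbabilityMeasure Ω)) {E : Type*} [MeasurableSpace E]
    (f : Measure E → ℝ) (ξ : Ω → E) : Set (ProbabilityMeasure Ω) :=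
  {P ∈ 𝒮 | f ((P : Measure Ω).map ξ) = Ff 𝒮 f ξ}

/-- `Γ(A, B) = sup_{P ∈ A} inf_{Q ∈ B} d_LP(P, Q)`. -/
def GammaDist {Ω' : Type*} [MeasurableSpace Ω'] [PseudoEMetricSpace Ω']
    (A B : Set (ProbabilityMeasure Ω')) : ℝ :=
  ⨆ P : A, ⨅ Q : B,
    levyProkhorovDist ((P : ProbabilityMeasure Ω') : Measure Ω')
      ((Q : ProbabilityMeasure Ω') : Measure Ω')

open scoped ENNReal

section Helpers

lemma Measure.map_finsetSum {α β ι : Type*} [MeasurableSpace α] [MeasurableSpace β]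
    (I : Finset ι) (μ : ι → Measure α) {f : α → β} (hf : Measurable f) :
    (∑ i ∈ I, μ i).map f = ∑ i ∈ I, (μ i).map f := by
  classical
  induction I using Finset.induction with
  | empty => simp [Measure.map_zero]
  | insert _ _ h ih => rw [Finset.sum_insert h, Measure.map_add _ _ hf, ih, Finset.sum_insert h]

variable {E : Type*} [NormedAddCommGroup E] [MeasurableSpace E] [BorelSpace E] [SecondCountableTopology E]

lemma w2_key {Ω : Type*} [MeasurableSpace Ω] {f : Measure E → ℝ} {C : ℝ}
    (hf : W2Lipschitz f C)
    (P : Measure Ω) [IsProbabilityMeasure P] {g g' : Ω → E}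
    (hg : Measurable g) (hg' : Measurable g')
    (hgi : Integrable (fun ω => ‖g ω‖ ^ 2) P)
    (hgi' : Integrable (fun ω => ‖g' ω‖ ^ 2) P) :
    |f (P.map g) - f (P.map g')| ≤ C * Real.sqrt (∫ ω, ‖g ω - g' ω‖ ^ 2 ∂P) := by
  have hpair : Measurable (fun ω => (g ω, g' ω)) := hg.prodMk hg'
  set ρ : Measure (E × E) := P.map (fun ω => (g ω, g' ω)) with hρ
  have hprob : IsProbabilityMeasure ρ := Measure.isProbabilityMeasure_map hpair.aemeasurable
  have h1 : ρ.map Prod.fst = P.map g := by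
    rw [hρ, Measure.map_map measurable_fst hpair]; rfl
  have h2 : ρ.map Prod.snd = P.map g' := by
    rw [hρ, Measure.map_map measurable_snd hpair]; rfl
  have hm1 : Measurable (fun p : E × E => ‖p.1‖ ^ 2) :=
    (measurable_fst.norm).pow_const 2
  have hm2 : Measurable (fun p : E × E => ‖p.2‖ ^ 2) :=
    (measurable_snd.norm).pow_const 2
  have hm3 : Measurable (fun p : E × E => ‖p.1 - p.2‖ ^ 2) :=
    ((measurable_fst.sub measurable_snd).norm).pow_const 2
  have hi1 : Integrable (fun p : E × E => ‖p.1‖ ^ 2) ρ := by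
    rw [hρ, integrable_map_measure hm1.aestronglyMeasurable hpair.aemeasurable]
    exact hgi
  have hi2 : Integrable (fun p : E × E => ‖p.2‖ ^ 2) ρ := by
    rw [hρ, integrable_map_measure hm2.aestronglyMeasurable hpair.aemeasurable]
    exact hgi'
  have hint : ∫ p, ‖p.1 - p.2‖ ^ 2 ∂ρ = ∫ ω, ‖g ω - g' ω‖ ^ 2 ∂P := by
    rw [hρ, integral_map hpair.aemeasurable hm3.aestronglyMeasurable]
  rw [← h1, ← h2, ← hint]
  exact hf ρ hprob hi1 hi2

lemma dirac_compare {f : Measure E → ℝ} {C : ℝ} (hC : 0 ≤ C) (hf : W2Lipschitz f C)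
    (s : Finset E) {R : ℝ} (hR : 0 ≤ R) (hs : ∀ v ∈ s, ‖v‖ ≤ R)
    (a b : E → ℝ≥0∞) (ha : ∑ v ∈ s, a v = 1) (hb : ∑ v ∈ s, b v = 1) :
    |f (∑ v ∈ s, a v • Measure.dirac v) - f (∑ v ∈ s, b v • Measure.dirac v)| ≤
      C * Real.sqrt ((2 * R) ^ 2 * ((1 : ℝ≥0∞) - ∑ v ∈ s, min (a v) (b v)).toReal) := by
  classical
  set c : E → ℝ≥0∞ := fun v => min (a v) (b v) with hc
  have hca : ∀ v, c v ≤ a v := fun v => min_le_left _ _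
  have hcb : ∀ v, c v ≤ b v := fun v => min_le_right _ _
  have hcsum : ∑ v ∈ s, c v ≤ 1 := ha ▸ Finset.sum_le_sum (fun v _ => hca v)
  have hcsum_top : ∑ v ∈ s, c v ≠ ∞ := ne_top_of_le_ne_top ENNReal.one_ne_top hcsum
  set sd : ℝ≥0∞ := 1 - ∑ v ∈ s, c v with hsddef
  have hsdle : sd ≤ 1 := tsub_le_self
  have hsdtop : sd ≠ ∞ := ne_top_of_le_ne_top ENNReal.one_ne_top hsdle
  set νa : Measure E := ∑ v ∈ s, (a v - c v) • Measure.dirac v with hνadef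
  set νb : Measure E := ∑ v ∈ s, (b v - c v) • Measure.dirac v with hνbdef
  have hνa_univ : νa univ = sd := by
    rw [hνadef, Measure.finset_sum_apply]
    have h1 : ∑ v ∈ s, ((a v - c v) • Measure.dirac v) univ = ∑ v ∈ s, (a v - c v) := by
      refine Finset.sum_congr rfl fun v _ => ?_
      rw [Measure.smul_apply, measure_univ, smul_eq_mul, mul_one]
    rw [h1, hsddef]
    refine ENNReal.eq_sub_of_add_eq hcsum_top ?_
    rw [← Finset.sum_add_distrib, ← ha]
    exact Finset.sum_congr rfl fun v _ => tsub_add_cancel_of_le (hca v)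
  have hνb_univ : νb univ = sd := by
    rw [hνbdef, Measure.finset_sum_apply]
    have h1 : ∑ v ∈ s, ((b v - c v) • Measure.dirac v) univ = ∑ v ∈ s, (b v - c v) := by
      refine Finset.sum_congr rfl fun v _ => ?_
      rw [Measure.smul_apply, measure_univ, smul_eq_mul, mul_one]
    rw [h1, hsddef]
    refine ENNReal.eq_sub_of_add_eq hcsum_top ?_
    rw [← Finset.sum_add_distrib, ← hb]
    exact Finset.sum_congr rfl fun v _ => tsub_add_cancel_of_le (hcb v)
  haveI hfina : IsFiniteMeasure νa := ⟨by rw [hνa_univ]; exact hsdtop.lt_top⟩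
  haveI hfinb : IsFiniteMeasure νb := ⟨by rw [hνb_univ]; exact hsdtop.lt_top⟩
  set ρ : Measure (E × E) :=
    (∑ v ∈ s, c v • Measure.dirac (v, v)) + sd⁻¹ • (νa.prod νb) with hρdef
  -- marginals
  have hsum_fst : (∑ v ∈ s, c v • Measure.dirac ((v : E), v)).map Prod.fst
      = ∑ v ∈ s, c v • Measure.dirac v := by
    rw [Measure.map_finsetSum _ _ measurable_fst]
    refine Finset.sum_congr rfl fun v _ => ?_
    rw [Measure.map_smul, Measure.map_dirac' measurable_fst]
  have hsum_snd : (∑ v ∈ s, c v • Measure.dirac ((v : E), v)).map Prod.snd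
      = ∑ v ∈ s, c v • Measure.dirac v := by
    rw [Measure.map_finsetSum _ _ measurable_snd]
    refine Finset.sum_congr rfl fun v _ => ?_
    rw [Measure.map_smul, Measure.map_dirac' measurable_snd]
  have hterm_fst : (sd⁻¹ • (νa.prod νb)).map Prod.fst = νa := by
    rw [Measure.map_smul, Measure.map_fst_prod, hνb_univ]
    by_cases h0 : sd = 0
    · have : νa = 0 := Measure.measure_univ_eq_zero.mp (by rw [hνa_univ, h0])
      simp [this]
    · rw [smul_smul, ENNReal.inv_mul_cancel h0 hsdtop, one_smul]
  have hterm_snd : (sd⁻¹ • (νa.prod νb)).map Prod.snd = νb := by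
    rw [Measure.map_smul, Measure.map_snd_prod, hνa_univ]
    by_cases h0 : sd = 0
    · have : νb = 0 := Measure.measure_univ_eq_zero.mp (by rw [hνb_univ, h0])
      simp [this]
    · rw [smul_smul, ENNReal.inv_mul_cancel h0 hsdtop, one_smul]
  have hfst : ρ.map Prod.fst = ∑ v ∈ s, a v • Measure.dirac v := by
    rw [hρdef, Measure.map_add _ _ measurable_fst, hsum_fst, hterm_fst, hνadef,
      ← Finset.sum_add_distrib]
    refine Finset.sum_congr rfl fun v _ => ?_
    rw [← add_smul, add_tsub_cancel_of_le (hca v)]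
  have hsnd : ρ.map Prod.snd = ∑ v ∈ s, b v • Measure.dirac v := by
    rw [hρdef, Measure.map_add _ _ measurable_snd, hsum_snd, hterm_snd, hνbdef,
      ← Finset.sum_add_distrib]
    refine Finset.sum_congr rfl fun v _ => ?_
    rw [← add_smul, add_tsub_cancel_of_le (hcb v)]
  have hρuniv : ρ univ = 1 := by
    have h1 : ρ univ = (ρ.map Prod.fst) univ := by
      rw [Measure.map_apply measurable_fst MeasurableSet.univ, preimage_univ]
    rw [h1, hfst, Measure.finset_sum_apply]
    have h2 : ∑ v ∈ s, (a v • Measure.dirac v) univ = ∑ v ∈ s, a v := by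
      refine Finset.sum_congr rfl fun v _ => ?_
      rw [Measure.smul_apply, measure_univ, smul_eq_mul, mul_one]
    rw [h2, ha]
  haveI hρprob : IsProbabilityMeasure ρ := ⟨hρuniv⟩
  -- support
  have hsmeas : MeasurableSet ((↑s : Set E) ×ˢ (↑s : Set E)) :=
    (s.finite_toSet.measurableSet).prod (s.finite_toSet.measurableSet)
  have hscmeas : MeasurableSet ((↑s : Set E)ᶜ) := s.finite_toSet.measurableSet.compl
  have hνa_out : νa ((↑s : Set E)ᶜ) = 0 := by
    rw [hνadef, Measure.finset_sum_apply]
    refine Finset.sum_eq_zero fun v hv => ?_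
    rw [Measure.smul_apply, Measure.dirac_apply' _ hscmeas,
      indicator_of_notMem (by simp [hv] : v ∉ (↑s : Set E)ᶜ), smul_eq_mul, mul_zero]
  have hνb_out : νb ((↑s : Set E)ᶜ) = 0 := by
    rw [hνbdef, Measure.finset_sum_apply]
    refine Finset.sum_eq_zero fun v hv => ?_
    rw [Measure.smul_apply, Measure.dirac_apply' _ hscmeas,
      indicator_of_notMem (by simp [hv] : v ∉ (↑s : Set E)ᶜ), smul_eq_mul, mul_zero]
  have hprod_out : (νa.prod νb) (((↑s : Set E) ×ˢ (↑s : Set E))ᶜ) = 0 := by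
    have hsub : (((↑s : Set E) ×ˢ (↑s : Set E))ᶜ)
        ⊆ (((↑s : Set E)ᶜ) ×ˢ (univ : Set E)) ∪ ((univ : Set E) ×ˢ ((↑s : Set E)ᶜ)) := by
      intro p hp
      simp only [mem_compl_iff, mem_prod, not_and_or] at hp
      rcases hp with h | h
      · exact Or.inl ⟨h, mem_univ _⟩
      · exact Or.inr ⟨mem_univ _, h⟩
    refine le_antisymm (le_trans (measure_mono hsub) ?_) zero_le
    refine le_trans (measure_union_le _ _) ?_
    rw [Measure.prod_prod, Measure.prod_prod, hνa_out, hνb_out, zero_mul, mul_zero, add_zero]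
  have hρ_out : ρ (((↑s : Set E) ×ˢ (↑s : Set E))ᶜ) = 0 := by
    rw [hρdef, Measure.add_apply, Measure.smul_apply, hprod_out, smul_eq_mul, mul_zero,
      add_zero, Measure.finset_sum_apply]
    refine Finset.sum_eq_zero fun v hv => ?_
    rw [Measure.smul_apply, Measure.dirac_apply' _ hsmeas.compl,
      indicator_of_notMem (by simp [hv] : ((v : E), (v : E)) ∉ ((↑s : Set E) ×ˢ (↑s : Set E))ᶜ),
      smul_eq_mul, mul_zero]
  have hae : ∀ᵐ p ∂ρ, p ∈ ((↑s : Set E) ×ˢ (↑s : Set E)) := by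
    rw [ae_iff]
    exact hρ_out
  -- integrability
  have hm1 : Measurable (fun p : E × E => ‖p.1‖ ^ 2) := (measurable_fst.norm).pow_const 2
  have hm2 : Measurable (fun p : E × E => ‖p.2‖ ^ 2) := (measurable_snd.norm).pow_const 2
  have hm3 : Measurable (fun p : E × E => ‖p.1 - p.2‖ ^ 2) :=
    ((measurable_fst.sub measurable_snd).norm).pow_const 2
  have hi1 : Integrable (fun p : E × E => ‖p.1‖ ^ 2) ρ := by
    refine Integrable.mono' (integrable_const (R ^ 2)) hm1.aestronglyMeasurable ?_
    filter_upwards [hae] with p hp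
    rw [Real.norm_of_nonneg (by positivity)]
    exact pow_le_pow_left₀ (norm_nonneg _) (hs p.1 hp.1) 2
  have hi2 : Integrable (fun p : E × E => ‖p.2‖ ^ 2) ρ := by
    refine Integrable.mono' (integrable_const (R ^ 2)) hm2.aestronglyMeasurable ?_
    filter_upwards [hae] with p hp
    rw [Real.norm_of_nonneg (by positivity)]
    exact pow_le_pow_left₀ (norm_nonneg _) (hs p.2 hp.2) 2
  -- cost
  set D : Set (E × E) := ((↑s : Set E) ×ˢ (↑s : Set E)) \ {p : E × E | p.1 = p.2} with hDdef
  have hDmeas : MeasurableSet D :=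
    hsmeas.diff ((isClosed_eq continuous_fst continuous_snd).measurableSet)
  have hi3 : Integrable (fun p : E × E => ‖p.1 - p.2‖ ^ 2) ρ := by
    refine Integrable.mono' (integrable_const ((2 * R) ^ 2)) hm3.aestronglyMeasurable ?_
    filter_upwards [hae] with p hp
    rw [Real.norm_of_nonneg (by positivity)]
    refine pow_le_pow_left₀ (norm_nonneg _) ?_ 2
    calc ‖p.1 - p.2‖ ≤ ‖p.1‖ + ‖p.2‖ := norm_sub_le _ _
    _ ≤ R + R := add_le_add (hs p.1 hp.1) (hs p.2 hp.2)
    _ = 2 * R := by ring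
  have hcost : ∫ p, ‖p.1 - p.2‖ ^ 2 ∂ρ ≤ (2 * R) ^ 2 * (ρ D).toReal := by
    have hind : Integrable (fun p : E × E => D.indicator (fun _ => (2 * R) ^ 2) p) ρ :=
      (integrable_const ((2 * R) ^ 2)).indicator hDmeas
    have hle : ∀ᵐ p ∂ρ, ‖p.1 - p.2‖ ^ 2 ≤ D.indicator (fun _ => (2 * R) ^ 2) p := by
      filter_upwards [hae] with p hp
      by_cases hdiag : p.1 = p.2
      · rw [hdiag, sub_self, norm_zero]
        simpa using indicator_nonneg (fun _ _ => by positivity) p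
      · have hpD : p ∈ D := ⟨hp, hdiag⟩
        rw [indicator_of_mem hpD]
        refine pow_le_pow_left₀ (norm_nonneg _) ?_ 2
        calc ‖p.1 - p.2‖ ≤ ‖p.1‖ + ‖p.2‖ := norm_sub_le _ _
        _ ≤ R + R := add_le_add (hs p.1 hp.1) (hs p.2 hp.2)
        _ = 2 * R := by ring
    calc ∫ p, ‖p.1 - p.2‖ ^ 2 ∂ρ ≤ ∫ p, D.indicator (fun _ => (2 * R) ^ 2) p ∂ρ :=
      integral_mono_ae hi3 hind hle
    _ = (2 * R) ^ 2 * (ρ D).toReal := by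
        rw [integral_indicator_const _ hDmeas, smul_eq_mul, Measure.real]; ring
  have hρD : ρ D ≤ sd := by
    have h1 : ρ D = ∑ v ∈ s, (c v • Measure.dirac ((v : E), v)) D + sd⁻¹ * (νa.prod νb) D := by
      rw [hρdef, Measure.add_apply, Measure.finset_sum_apply, Measure.smul_apply, smul_eq_mul]
    have h2 : ∀ v ∈ s, (c v • Measure.dirac ((v : E), v)) D = 0 := by
      intro v hv
      rw [Measure.smul_apply, Measure.dirac_apply' _ hDmeas,
        indicator_of_notMem (by simp [hDdef] : ((v : E), (v : E)) ∉ D), smul_eq_mul, mul_zero]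
    rw [h1, Finset.sum_eq_zero h2, zero_add]
    have h3 : (νa.prod νb) D ≤ sd * sd := by
      refine le_trans (measure_mono (subset_univ D)) ?_
      rw [← univ_prod_univ, Measure.prod_prod, hνa_univ, hνb_univ]
    by_cases h0 : sd = 0
    · rw [h0] at h3 ⊢
      simp only [mul_zero, le_zero_iff] at h3
      rw [h3, mul_zero]
    · calc sd⁻¹ * (νa.prod νb) D ≤ sd⁻¹ * (sd * sd) :=
        mul_le_mul_right h3 _
      _ = (sd⁻¹ * sd) * sd := by ring
      _ = sd := by rw [ENNReal.inv_mul_cancel h0 hsdtop, one_mul]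
  have htR : (ρ D).toReal ≤ sd.toReal := ENNReal.toReal_mono hsdtop hρD
  calc |f (∑ v ∈ s, a v • Measure.dirac v) - f (∑ v ∈ s, b v • Measure.dirac v)|
      = |f (ρ.map Prod.fst) - f (ρ.map Prod.snd)| := by rw [hfst, hsnd]
    _ ≤ C * Real.sqrt (∫ p, ‖p.1 - p.2‖ ^ 2 ∂ρ) := hf ρ hρprob hi1 hi2
    _ ≤ C * Real.sqrt ((2 * R) ^ 2 * sd.toReal) := by
        refine mul_le_mul_of_nonneg_left (Real.sqrt_le_sqrt ?_) hC
        refine hcost.trans ?_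
        exact mul_le_mul_of_nonneg_left htR (by positivity)

lemma map_eq_sum_dirac {Ω : Type*} [MeasurableSpace Ω] (P : Measure Ω) {g : Ω → E}
    (hg : Measurable g) (s : Finset E) (hrange : ∀ ω, g ω ∈ s) :
    P.map g = ∑ v ∈ s, P (g ⁻¹' {v}) • Measure.dirac v := by
  classical
  ext t ht
  rw [Measure.map_apply hg ht, Measure.finset_sum_apply]
  have hsplit : g ⁻¹' t = ⋃ v ∈ s.filter (· ∈ t), g ⁻¹' {v} := by
    ext ω
    simp only [mem_preimage, mem_iUnion, Finset.mem_filter, exists_prop, mem_singleton_iff]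
    constructor
    · intro h; exact ⟨g ω, ⟨hrange ω, h⟩, rfl⟩
    · rintro ⟨v, ⟨-, hv⟩, rfl⟩; exact hv
  rw [hsplit, measure_biUnion_finset]
  · rw [Finset.sum_filter]
    refine Finset.sum_congr rfl fun v hv => ?_
    rw [Measure.smul_apply, Measure.dirac_apply' v ht, smul_eq_mul]
    by_cases h : v ∈ t
    · simp [h, indicator_of_mem]
    · simp [h, indicator_of_notMem]
  · intro v hv w hw hvw
    simp only [Finset.coe_filter, mem_setOf_eq] at hv hw
    apply Disjoint.preimage
    simp [disjoint_singleton, hvw]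
  · exact fun v _ => hg (measurableSet_singleton v)

lemma integrable_sq_of_forall_bound {Ω : Type*} [MeasurableSpace Ω] (Q : Measure Ω)
    [IsFiniteMeasure Q] {g : Ω → E} (hg : Measurable g) {K : ℝ}
    (hK : ∀ ω, ‖g ω‖ ≤ K) : Integrable (fun ω => ‖g ω‖ ^ 2) Q := by
  refine Integrable.mono' (integrable_const (K ^ 2))
    ((hg.norm.pow_const 2).aestronglyMeasurable) ?_
  refine Eventually.of_forall fun ω => ?_
  rw [Real.norm_of_nonneg (by positivity)]
  exact pow_le_pow_left₀ (norm_nonneg _) (hK ω) 2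

set_option maxHeartbeats 2000000 in
lemma cont_along {Ω : Type*} [MeasurableSpace Ω] [MetricSpace Ω] [BorelSpace Ω]
    [ProperSpace E]
    {f : Measure E → ℝ} {C : ℝ} (hC : 0 ≤ C) (hf : W2Lipschitz f C)
    {𝒮 : Set (ProbabilityMeasure Ω)} {ξ : Ω → E} (hξ : MemL2 𝒮 ξ)
    {Pn : ℕ → ProbabilityMeasure Ω} (hPn : ∀ n, Pn n ∈ 𝒮) {P : ProbabilityMeasure Ω}
    (hP : P ∈ 𝒮) (hlim : Tendsto Pn atTop (𝓝 P)) :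
    Tendsto (fun n => f ((Pn n : Measure Ω).map ξ)) atTop
      (𝓝 (f ((P : Measure Ω).map ξ))) := by
  classical
  rw [Metric.tendsto_atTop]
  intro δ hδ
  have hC1 : (0:ℝ) < C + 1 := by linarith
  set δ' : ℝ := δ / (8 * (C + 1)) with hδ'def
  have hδ'pos : 0 < δ' := by positivity
  obtain ⟨θ, hθ⟩ := hξ.2.2 δ' hδ'pos
  set R : ℝ := ‖θ‖ with hRdef
  have hRnn : 0 ≤ R := norm_nonneg _
  have hθmem : ∀ ω, θ ω ∈ Metric.closedBall (0:E) R := fun ω => by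
    rw [Metric.mem_closedBall, dist_zero_right]; exact θ.norm_coe_le_norm ω
  have hθmeas : Measurable (θ : Ω → E) := θ.continuous.measurable
  -- term1 : uniform approximation over 𝒮
  have happrox : ∀ Q : ProbabilityMeasure Ω, Q ∈ 𝒮 →
      |f ((Q : Measure Ω).map ξ) - f ((Q : Measure Ω).map (θ : Ω → E))| ≤ C * δ' := by
    intro Q hQ
    have h := w2_key hf (Q : Measure Ω) hξ.1 hθmeas (hξ.2.1 Q hQ)
      (integrable_sq_of_forall_bound _ hθmeas (fun ω => θ.norm_coe_le_norm ω))
    refine h.trans ?_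
    refine mul_le_mul_of_nonneg_left ?_ hC
    calc Real.sqrt (∫ ω, ‖ξ ω - θ ω‖ ^ 2 ∂(Q : Measure Ω)) ≤ Real.sqrt (δ' ^ 2) :=
      Real.sqrt_le_sqrt (hθ Q hQ)
    _ = δ' := Real.sqrt_sq hδ'pos.le
  set μ : Measure E := (P : Measure Ω).map (θ : Ω → E) with hμdef
  haveI hμprob : IsProbabilityMeasure μ := Measure.isProbabilityMeasure_map hθmeas.aemeasurable
  -- finite subcover of the ball by small balls with μ-null boundary
  obtain ⟨t, ht⟩ := (isCompact_closedBall (0:E) R).elim_finite_subcover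
    (fun c : Metric.closedBall (0:E) R => Metric.ball (c : E) (δ'/2))
    (fun c => Metric.isOpen_ball)
    (fun x hx => mem_iUnion.mpr ⟨⟨x, hx⟩, Metric.mem_ball_self (by positivity)⟩)
  set m : ℕ := t.card with hmdef
  set cen : ℕ → E := fun i => if h : i < m then ((t.equivFin.symm ⟨i, h⟩ : _).1 : E) else 0
    with hcendef
  have hcenR : ∀ i, ‖cen i‖ ≤ R := by
    intro i
    by_cases h : i < m
    · have h2 := ((t.equivFin.symm ⟨i, h⟩ : _).1).2
      rw [Metric.mem_closedBall, dist_zero_right] at h2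
      simpa [hcendef, dif_pos h] using h2
    · simp [hcendef, dif_neg h, hRnn]
  have hrex : ∀ i : ℕ, ∃ r, r ∈ Ioo (δ'/2) δ' ∧ μ (frontier (Metric.ball (cen i) r)) = 0 := by
    intro i
    obtain ⟨r, hr1, hr2⟩ := exists_null_frontier_thickening μ {cen i} (half_lt_self hδ'pos)
    rw [Metric.thickening_singleton] at hr2
    exact ⟨r, hr1, hr2⟩
  choose rad hradIoo hradnull using hrex
  set B : ℕ → Set E := fun i => if i < m then Metric.ball (cen i) (rad i) else ∅ with hBdef
  have hBmeas : ∀ i, MeasurableSet (B i) := by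
    intro i; by_cases h : i < m <;>
      simp [hBdef, h, Metric.isOpen_ball.measurableSet, MeasurableSet.empty]
  have hBnull : ∀ i, μ (frontier (B i)) = 0 := by
    intro i; by_cases h : i < m
    · simpa [hBdef, h] using hradnull i
    · simp [hBdef, h]
  set A : ℕ → Set E := fun i => B i \ ⋃ j, ⋃ (_ : j < i), B j with hAdef
  have hAmeas : ∀ i, MeasurableSet (A i) := fun i =>
    (hBmeas i).diff (MeasurableSet.iUnion fun j => MeasurableSet.iUnion fun _ => hBmeas j)
  have hAsubB : ∀ i, A i ⊆ B i := fun i => diff_subset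
  have hAuniq : ∀ x i j, x ∈ A i → x ∈ A j → i = j := by
    intro x i j hi hj
    by_contra hne
    rcases Nat.lt_or_ge i j with h | h
    · exact hj.2 (mem_iUnion.mpr ⟨i, mem_iUnion.mpr ⟨h, hi.1⟩⟩)
    · exact hi.2 (mem_iUnion.mpr ⟨j, mem_iUnion.mpr
        ⟨lt_of_le_of_ne h (Ne.symm hne), hj.1⟩⟩)
  have hcover : ∀ x ∈ Metric.closedBall (0:E) R,
      ∃ i, i < m ∧ x ∈ A i ∧ x ∈ Metric.ball (cen i) δ' := by
    intro x hx
    have hxB : ∃ n, x ∈ B n := by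
      obtain ⟨c, hc, hxc⟩ := mem_iUnion₂.mp (ht hx)
      refine ⟨(t.equivFin ⟨c, hc⟩ : Fin m), ?_⟩
      have hlt : ((t.equivFin ⟨c, hc⟩ : Fin m) : ℕ) < m := (t.equivFin ⟨c, hc⟩).isLt
      have hcen : cen ((t.equivFin ⟨c, hc⟩ : Fin m) : ℕ) = (c : E) := by
        simp [hcendef, dif_pos hlt]
      have hdist : x ∈ Metric.ball (cen ((t.equivFin ⟨c, hc⟩ : Fin m) : ℕ))
          (rad ((t.equivFin ⟨c, hc⟩ : Fin m) : ℕ)) := by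
        rw [hcen]
        exact Metric.ball_subset_ball (le_of_lt (hradIoo _).1) hxc
      simpa [hBdef, hlt] using hdist
    set n₀ := Nat.find hxB with hn₀def
    have hn₀B : x ∈ B n₀ := Nat.find_spec hxB
    have hn₀min : ∀ j, j < n₀ → x ∉ B j := fun j hj => Nat.find_min hxB hj
    have hn₀m : n₀ < m := by
      by_contra h
      simp [hBdef, h] at hn₀B
    refine ⟨n₀, hn₀m, ⟨hn₀B, ?_⟩, ?_⟩
    · intro hmem
      obtain ⟨j, hj⟩ := mem_iUnion.mp hmem
      obtain ⟨hjn, hxj⟩ := mem_iUnion.mp hj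
      exact hn₀min j hjn hxj
    · have hball : x ∈ Metric.ball (cen n₀) (rad n₀) := by simpa [hBdef, hn₀m] using hn₀B
      exact Metric.ball_subset_ball (le_of_lt (hradIoo n₀).2) hball
  -- the snapping map
  set q : E → E := fun x => ∑ i ∈ Finset.range m, (A i).indicator (fun _ => cen i) x with hqdef
  have hqmeas : Measurable q :=
    Finset.measurable_sum _ fun i _ => (measurable_const.indicator (hAmeas i))
  have hqval : ∀ i, i < m → ∀ x ∈ A i, q x = cen i := by
    intro i him x hx
    show ∑ j ∈ Finset.range m, (A j).indicator (fun _ => cen j) x = cen i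
    rw [Finset.sum_eq_single_of_mem i (Finset.mem_range.mpr him)]
    · exact indicator_of_mem hx _
    · intro j _ hji
      exact indicator_of_notMem (fun hxj => hji (hAuniq x j i hxj hx)) _
  set satoms : Finset E := (Finset.range m).image cen ∪ {0} with hsatomsdef
  have hqatom : ∀ x, q x ∈ satoms := by
    intro x
    by_cases h : ∃ i, i < m ∧ x ∈ A i
    · obtain ⟨i, him, hxi⟩ := h
      rw [hqval i him x hxi]
      exact Finset.mem_union_left _ (Finset.mem_image.mpr ⟨i, Finset.mem_range.mpr him, rfl⟩)
    · push_neg at h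
      have hq0 : q x = 0 := by
        show ∑ i ∈ Finset.range m, (A i).indicator (fun _ => cen i) x = 0
        exact Finset.sum_eq_zero fun i hi =>
          indicator_of_notMem (h i (Finset.mem_range.mp hi)) _
      rw [hq0]
      exact Finset.mem_union_right _ (Finset.mem_singleton_self 0)
  have hatomnorm : ∀ v ∈ satoms, ‖v‖ ≤ R + δ' := by
    intro v hv
    rcases Finset.mem_union.mp hv with h | h
    · obtain ⟨i, _, rfl⟩ := Finset.mem_image.mp h
      exact (hcenR i).trans (by linarith)
    · rw [Finset.mem_singleton.mp h]
      simp only [norm_zero]; linarith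
  -- the discretized random variable
  set g' : Ω → E := fun ω => q (θ ω) with hg'def
  have hg'meas : Measurable g' := hqmeas.comp hθmeas
  have hg'atom : ∀ ω, g' ω ∈ satoms := fun ω => hqatom _
  have hg'bound : ∀ ω, ‖g' ω‖ ≤ R + δ' := fun ω => hatomnorm _ (hg'atom ω)
  have hθq : ∀ ω, ‖θ ω - g' ω‖ ≤ δ' := by
    intro ω
    obtain ⟨i, him, hAi, hball⟩ := hcover (θ ω) (hθmem ω)
    have : g' ω = cen i := hqval i him _ hAi
    rw [this, ← dist_eq_norm]
    exact le_of_lt (Metric.mem_ball.mp hball)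
  -- term2 : snapping error, for any probability measure
  have hterm2 : ∀ Q : Measure Ω, IsProbabilityMeasure Q →
      |f (Q.map (θ : Ω → E)) - f (Q.map g')| ≤ C * δ' := by
    intro Q hQ
    haveI := hQ
    have h := w2_key hf Q hθmeas hg'meas
      (integrable_sq_of_forall_bound _ hθmeas (fun ω => θ.norm_coe_le_norm ω))
      (integrable_sq_of_forall_bound _ hg'meas hg'bound)
    refine h.trans ?_
    refine mul_le_mul_of_nonneg_left ?_ hC
    have hintle : ∫ ω, ‖θ ω - g' ω‖ ^ 2 ∂Q ≤ δ' ^ 2 := by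
      have hint : Integrable (fun ω => ‖θ ω - g' ω‖ ^ 2) Q :=
        integrable_sq_of_forall_bound _ (hθmeas.sub hg'meas) hθq
      have hle : (fun ω => ‖θ ω - g' ω‖ ^ 2) ≤ (fun _ : Ω => δ' ^ 2) :=
        fun ω => pow_le_pow_left₀ (norm_nonneg _) (hθq ω) 2
      have h2 := integral_mono hint (integrable_const _) hle
      simpa [measure_univ] using h2
    calc Real.sqrt (∫ ω, ‖θ ω - g' ω‖ ^ 2 ∂Q) ≤ Real.sqrt (δ' ^ 2) :=
      Real.sqrt_le_sqrt hintle
    _ = δ' := Real.sqrt_sq hδ'pos.le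
  -- the null set
  set Nset : Set E := ⋃ i, frontier (B i) with hNdef
  have hNnull : μ Nset = 0 := measure_iUnion_null hBnull
  have hNmeas : MeasurableSet Nset :=
    MeasurableSet.iUnion fun i => isClosed_frontier.measurableSet
  -- q is locally constant off Nset
  have hlocconst : ∀ x, x ∉ Nset → ∃ U : Set E, IsOpen U ∧ x ∈ U ∧ ∀ y ∈ U, q y = q x := by
    intro x hx
    set U : Set E :=
      ⋂ i ∈ Finset.range m, (if x ∈ B i then interior (B i) else interior ((B i)ᶜ)) with hUdef
    have hUopen : IsOpen U := isOpen_biInter_finset fun i _ => by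
      split <;> exact isOpen_interior
    have hxU : x ∈ U := by
      rw [hUdef]
      refine mem_iInter₂.mpr fun i _ => ?_
      have hxf : x ∉ frontier (B i) := fun h => hx (mem_iUnion.mpr ⟨i, h⟩)
      by_cases hxB : x ∈ B i
      · rw [if_pos hxB]
        by_contra hint
        exact hxf ⟨subset_closure hxB, hint⟩
      · rw [if_neg hxB, interior_compl, mem_compl_iff]
        intro hcl
        exact hxf ⟨hcl, fun hint => hxB (interior_subset hint)⟩
    have hsame : ∀ y ∈ U, ∀ i, i < m → (y ∈ B i ↔ x ∈ B i) := by
      intro y hy i him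
      have hyi := mem_iInter₂.mp hy i (Finset.mem_range.mpr him)
      by_cases hxB : x ∈ B i
      · rw [if_pos hxB] at hyi
        exact ⟨fun _ => hxB, fun _ => interior_subset hyi⟩
      · rw [if_neg hxB, interior_compl] at hyi
        exact ⟨fun hyB => absurd (subset_closure hyB) hyi, fun hxB' => absurd hxB' hxB⟩
    refine ⟨U, hUopen, hxU, fun y hy => ?_⟩
    show (∑ i ∈ Finset.range m, (A i).indicator (fun _ => cen i) y)
        = ∑ i ∈ Finset.range m, (A i).indicator (fun _ => cen i) x
    refine Finset.sum_congr rfl fun i hi => ?_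
    have him := Finset.mem_range.mp hi
    have hAiff : y ∈ A i ↔ x ∈ A i := by
      have hBiff : ∀ j, j < i → (y ∈ B j ↔ x ∈ B j) :=
        fun j hj => hsame y hy j (lt_trans hj him)
      constructor
      · rintro ⟨h1, h2⟩
        refine ⟨(hsame y hy i him).mp h1, fun hmem => h2 ?_⟩
        obtain ⟨j, hj⟩ := mem_iUnion.mp hmem
        obtain ⟨hji, hxj⟩ := mem_iUnion.mp hj
        exact mem_iUnion.mpr ⟨j, mem_iUnion.mpr ⟨hji, (hBiff j hji).mpr hxj⟩⟩
      · rintro ⟨h1, h2⟩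
        refine ⟨(hsame y hy i him).mpr h1, fun hmem => h2 ?_⟩
        obtain ⟨j, hj⟩ := mem_iUnion.mp hmem
        obtain ⟨hji, hyj⟩ := mem_iUnion.mp hj
        exact mem_iUnion.mpr ⟨j, mem_iUnion.mpr ⟨hji, (hBiff j hji).mp hyj⟩⟩
    by_cases hxA : x ∈ A i
    · rw [indicator_of_mem hxA, indicator_of_mem (hAiff.mpr hxA)]
    · rw [indicator_of_notMem hxA, indicator_of_notMem (fun h => hxA (hAiff.mp h))]
  have hqfront : ∀ v : E, frontier (q ⁻¹' {v}) ⊆ Nset := by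
    intro v x hx
    by_contra hxN
    obtain ⟨U, hUopen, hxU, hUconst⟩ := hlocconst x hxN
    have hmeet : (U ∩ q ⁻¹' {v}).Nonempty :=
      mem_closure_iff.mp hx.1 U hUopen hxU
    obtain ⟨y, hyU, hyv⟩ := hmeet
    have hqx : q x = v := by rw [← hUconst y hyU]; exact hyv
    have hsub : U ⊆ q ⁻¹' {v} := fun z hz => by
      rw [mem_preimage, mem_singleton_iff, hUconst z hz, hqx]
    exact hx.2 (mem_interior.mpr ⟨U, hsub, hUopen, hxU⟩)
  -- weights
  set wP : E → ℝ≥0∞ := fun v => (P : Measure Ω) (g' ⁻¹' {v}) with hwPdef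
  set wn : ℕ → E → ℝ≥0∞ := fun n v => (Pn n : Measure Ω) (g' ⁻¹' {v}) with hwndef
  have hnull : ∀ v, (P : Measure Ω) (frontier (g' ⁻¹' {v})) = 0 := by
    intro v
    have h1 : frontier (g' ⁻¹' {v}) ⊆ (θ : Ω → E) ⁻¹' (frontier (q ⁻¹' {v})) := by
      rw [show g' ⁻¹' {v} = (θ : Ω → E) ⁻¹' (q ⁻¹' {v}) from rfl]
      exact θ.continuous.frontier_preimage_subset _
    refine le_antisymm (le_trans (measure_mono h1) ?_) zero_le
    refine le_trans (measure_mono (preimage_mono (hqfront v))) ?_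
    rw [← Measure.map_apply hθmeas hNmeas]
    exact le_of_eq hNnull
  have hconv : ∀ v, Tendsto (fun n => wn n v) atTop (𝓝 (wP v)) := fun v =>
    ProbabilityMeasure.tendsto_measure_of_null_frontier_of_tendsto' hlim (hnull v)
  -- the discretized measures as sums of diracs
  have hmapP : (P : Measure Ω).map g' = ∑ v ∈ satoms, wP v • Measure.dirac v :=
    map_eq_sum_dirac _ hg'meas satoms hg'atom
  have hmapn : ∀ n, (Pn n : Measure Ω).map g' = ∑ v ∈ satoms, wn n v • Measure.dirac v :=
    fun n => map_eq_sum_dirac _ hg'meas satoms hg'atom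
  have hsum_eq_one : ∀ Q : Measure Ω, IsProbabilityMeasure Q →
      ∑ v ∈ satoms, Q (g' ⁻¹' {v}) = 1 := by
    intro Q hQ
    haveI := hQ
    haveI : IsProbabilityMeasure (Q.map g') := Measure.isProbabilityMeasure_map hg'meas.aemeasurable
    have h1 : (Q.map g') univ = 1 := measure_univ
    rw [map_eq_sum_dirac _ hg'meas satoms hg'atom, Measure.finset_sum_apply] at h1
    calc ∑ v ∈ satoms, Q (g' ⁻¹' {v})
        = ∑ v ∈ satoms, (Q (g' ⁻¹' {v}) • Measure.dirac v) univ := by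
          refine Finset.sum_congr rfl fun v _ => ?_
          rw [Measure.smul_apply, measure_univ, smul_eq_mul, mul_one]
      _ = 1 := h1
  have hsumP : ∑ v ∈ satoms, wP v = 1 := hsum_eq_one _ inferInstance
  have hsumn : ∀ n, ∑ v ∈ satoms, wn n v = 1 := fun n => hsum_eq_one _ inferInstance
  -- the defect tends to zero
  set sdn : ℕ → ℝ :=
    fun n => ((1:ℝ≥0∞) - ∑ v ∈ satoms, min (wn n v) (wP v)).toReal with hsdndef
  have hsdtend : Tendsto sdn atTop (𝓝 0) := by
    have h1 : Tendsto (fun n => ∑ v ∈ satoms, min (wn n v) (wP v)) atTop (𝓝 1) := by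
      have h2 := tendsto_finset_sum satoms
        (fun v _ => (hconv v).min (tendsto_const_nhds (x := wP v)))
      have h3 : ∑ v ∈ satoms, min (wP v) (wP v) = 1 := by
        simpa [min_self] using hsumP
      rwa [h3] at h2
    have h2 : Tendsto (fun n => (1:ℝ≥0∞) - ∑ v ∈ satoms, min (wn n v) (wP v)) atTop (𝓝 0) := by
      have hcont := (ENNReal.continuous_sub_left ENNReal.one_ne_top).tendsto 1
      have := hcont.comp h1
      simpa [Function.comp_def] using this
    have := (ENNReal.tendsto_toReal (a := 0) (by simp)).comp h2
    simpa [Function.comp_def] using this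
  -- term3
  set R' : ℝ := R + δ' with hR'def
  have hterm3 : ∀ n, |f ((Pn n : Measure Ω).map g') - f ((P : Measure Ω).map g')| ≤
      C * Real.sqrt ((2 * R') ^ 2 * sdn n) := by
    intro n
    rw [hmapn n, hmapP]
    exact dirac_compare hC hf satoms (by positivity) hatomnorm _ _ (hsumn n) hsumP
  -- term3 is eventually small
  have hterm3tend : Tendsto (fun n => C * Real.sqrt ((2 * R') ^ 2 * sdn n)) atTop (𝓝 0) := by
    have h1 : Tendsto (fun n => (2 * R') ^ 2 * sdn n) atTop (𝓝 0) := by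
      simpa using hsdtend.const_mul ((2 * R') ^ 2)
    have h2 : Tendsto (fun n => Real.sqrt ((2 * R') ^ 2 * sdn n)) atTop (𝓝 0) := by
      have := (Real.continuous_sqrt.tendsto 0).comp h1
      simpa [Function.comp_def] using this
    simpa using h2.const_mul C
  have hev : ∀ᶠ n in atTop, C * Real.sqrt ((2 * R') ^ 2 * sdn n) < δ / 2 :=
    hterm3tend.eventually_lt_const (by positivity)
  obtain ⟨N, hN⟩ := eventually_atTop.mp hev
  refine ⟨N, fun n hn => ?_⟩
  rw [Real.dist_eq]
  have e1 := happrox (Pn n) (hPn n)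
  have e2 := hterm2 (Pn n : Measure Ω) inferInstance
  have e3 := hterm3 n
  have e4 : |f ((P : Measure Ω).map g') - f ((P : Measure Ω).map (θ : Ω → E))| ≤ C * δ' := by
    rw [abs_sub_comm]; exact hterm2 (P : Measure Ω) inferInstance
  have e5 : |f ((P : Measure Ω).map (θ : Ω → E)) - f ((P : Measure Ω).map ξ)| ≤ C * δ' := by
    rw [abs_sub_comm]; exact happrox P hP
  have hchain : |f ((Pn n : Measure Ω).map ξ) - f ((P : Measure Ω).map ξ)| ≤
      C * δ' + (C * δ' + (C * Real.sqrt ((2 * R') ^ 2 * sdn n) + (C * δ' + C * δ'))) := by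
    calc |f ((Pn n : Measure Ω).map ξ) - f ((P : Measure Ω).map ξ)|
        ≤ |f ((Pn n : Measure Ω).map ξ) - f ((Pn n : Measure Ω).map (θ : Ω → E))| +
          |f ((Pn n : Measure Ω).map (θ : Ω → E)) - f ((P : Measure Ω).map ξ)| :=
          abs_sub_le _ _ _
      _ ≤ |f ((Pn n : Measure Ω).map ξ) - f ((Pn n : Measure Ω).map (θ : Ω → E))| +
          (|f ((Pn n : Measure Ω).map (θ : Ω → E)) - f ((Pn n : Measure Ω).map g')| +
           |f ((Pn n : Measure Ω).map g') - f ((P : Measure Ω).map ξ)|) := by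
          gcongr
          exact abs_sub_le _ _ _
      _ ≤ |f ((Pn n : Measure Ω).map ξ) - f ((Pn n : Measure Ω).map (θ : Ω → E))| +
          (|f ((Pn n : Measure Ω).map (θ : Ω → E)) - f ((Pn n : Measure Ω).map g')| +
           (|f ((Pn n : Measure Ω).map g') - f ((P : Measure Ω).map g')| +
            |f ((P : Measure Ω).map g') - f ((P : Measure Ω).map ξ)|)) := by
          gcongr
          exact abs_sub_le _ _ _
      _ ≤ |f ((Pn n : Measure Ω).map ξ) - f ((Pn n : Measure Ω).map (θ : Ω → E))| +
          (|f ((Pn n : Measure Ω).map (θ : Ω → E)) - f ((Pn n : Measure Ω).map g')| +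
           (|f ((Pn n : Measure Ω).map g') - f ((P : Measure Ω).map g')| +
            (|f ((P : Measure Ω).map g') - f ((P : Measure Ω).map (θ : Ω → E))| +
             |f ((P : Measure Ω).map (θ : Ω → E)) - f ((P : Measure Ω).map ξ)|))) := by
          gcongr
          exact abs_sub_le _ _ _
      _ ≤ C * δ' + (C * δ' + (C * Real.sqrt ((2 * R') ^ 2 * sdn n) + (C * δ' + C * δ'))) := by
          gcongr
  have hsmall : 4 * (C * δ') ≤ δ / 2 := by
    have hkey : δ / 2 - 4 * (C * δ') = δ / (2 * (C + 1)) := by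
      rw [hδ'def]; field_simp; ring
    have hpos : 0 < δ / (2 * (C + 1)) := by positivity
    linarith
  have := hN n hn
  calc |f ((Pn n : Measure Ω).map ξ) - f ((P : Measure Ω).map ξ)|
      ≤ C * δ' + (C * δ' + (C * Real.sqrt ((2 * R') ^ 2 * sdn n) + (C * δ' + C * δ'))) :=
      hchain
    _ < δ := by linarith

end Helpers

set_option maxHeartbeats 2000000 in
/-- for `f` `W₂`-Lipschitz and `ξ, η ∈ L²(𝒮)` jointly `𝒮`-uniformly square
integrable, `Γ(𝒫^f_{ξ+εη}, 𝒫^f_{ξ}) → 0` as `ε ↓ 0`. -/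
theorem stmt_19 {Ω : Type*} [MeasurableSpace Ω] [MetricSpace Ω]
    [TopologicalSpace.SeparableSpace Ω] [CompleteSpace Ω] [BorelSpace Ω]
    (𝒮 : Set (ProbabilityMeasure Ω)) (h𝒮ne : 𝒮.Nonempty) (h𝒮c : IsCompact 𝒮)
    (k : ℕ) (hk : 1 ≤ k)
    (f : Measure (EuclideanSpace ℝ (Fin k)) → ℝ) (C : ℝ) (hC : 0 ≤ C)
    (hf : W2Lipschitz f C)
    (ξ η : Ω → EuclideanSpace ℝ (Fin k)) (hξ : MemL2 𝒮 ξ) (hη : MemL2 𝒮 η)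
    (hui : Tendsto
      (fun N : ℝ => ⨆ P : 𝒮,
        ∫ ω in {ω | N ≤ ‖ξ ω‖ + ‖η ω‖}, (‖ξ ω‖ ^ 2 + ‖η ω‖ ^ 2)
          ∂((P : ProbabilityMeasure Ω) : Measure Ω))
      atTop (𝓝 0)) :
    Tendsto
      (fun ε : ℝ =>
        GammaDist (maximizersF 𝒮 f (fun ω => ξ ω + ε • η ω)) (maximizersF 𝒮 f ξ))
      (𝓝[>] 0) (𝓝 0) := by
  classical
  obtain ⟨θξ, hθξ⟩ := hξ.2.2 1 one_pos
  obtain ⟨θη, hθη⟩ := hη.2.2 1 one_pos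
  set Mξ2 : ℝ := 2 + 2 * ‖θξ‖ ^ 2 with hMξ2def
  set Mη2 : ℝ := 2 + 2 * ‖θη‖ ^ 2 with hMη2def
  set Mη : ℝ := Real.sqrt Mη2 with hMηdef
  have hMη2nn : (0:ℝ) ≤ Mη2 := by rw [hMη2def]; positivity
  have hMηnn : 0 ≤ Mη := Real.sqrt_nonneg _
  -- uniform second-moment bounds
  have hsqb : ∀ (ζ : Ω → EuclideanSpace ℝ (Fin k))
      (θ : BoundedContinuousFunction Ω (EuclideanSpace ℝ (Fin k))), Measurable ζ →
      (∀ P ∈ 𝒮, Integrable (fun ω => ‖ζ ω‖ ^ 2) (P : Measure Ω)) →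
      (∀ P ∈ 𝒮, ∫ ω, ‖ζ ω - θ ω‖ ^ 2 ∂(P : Measure Ω) ≤ 1 ^ 2) →
      ∀ P ∈ 𝒮, ∫ ω, ‖ζ ω‖ ^ 2 ∂(P : Measure Ω) ≤ 2 + 2 * ‖θ‖ ^ 2 := by
    intro ζ θ hm hint happ P hP
    have hintsub : Integrable (fun ω => ‖ζ ω - θ ω‖ ^ 2) (P : Measure Ω) := by
      refine Integrable.mono' (((hint P hP).const_mul 2).add (integrable_const (2 * ‖θ‖ ^ 2)))
        (((hm.sub θ.continuous.measurable).norm.pow_const 2).aestronglyMeasurable)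
        (Eventually.of_forall fun ω => ?_)
      rw [Real.norm_of_nonneg (by positivity)]
      simp only [Pi.add_apply]
      have h1 : ‖ζ ω - θ ω‖ ≤ ‖ζ ω‖ + ‖θ ω‖ := norm_sub_le _ _
      have h2 : ‖θ ω‖ ≤ ‖θ‖ := θ.norm_coe_le_norm ω
      nlinarith [norm_nonneg (ζ ω), norm_nonneg (θ ω), norm_nonneg (ζ ω - θ ω),
        sq_nonneg (‖ζ ω‖ - ‖θ‖), sq_nonneg (‖ζ ω‖ - ‖θ ω‖)]
    have hle : ∀ ω, ‖ζ ω‖ ^ 2 ≤ 2 * ‖ζ ω - θ ω‖ ^ 2 + 2 * ‖θ‖ ^ 2 := by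
      intro ω
      have h1 : ‖ζ ω‖ ≤ ‖ζ ω - θ ω‖ + ‖θ ω‖ := by
        calc ‖ζ ω‖ = ‖(ζ ω - θ ω) + θ ω‖ := by rw [sub_add_cancel]
        _ ≤ ‖ζ ω - θ ω‖ + ‖θ ω‖ := norm_add_le _ _
      have h2 : ‖θ ω‖ ≤ ‖θ‖ := θ.norm_coe_le_norm ω
      nlinarith [norm_nonneg (ζ ω - θ ω), norm_nonneg (θ ω), norm_nonneg (ζ ω),
        sq_nonneg (‖ζ ω - θ ω‖ - ‖θ‖)]
    have hgint : Integrable (fun ω => 2 * ‖ζ ω - θ ω‖ ^ 2 + 2 * ‖θ‖ ^ 2) (P : Measure Ω) :=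
      (hintsub.const_mul 2).add (integrable_const _)
    have h3 := integral_mono (hint P hP) hgint hle
    rw [integral_add (hintsub.const_mul 2) (integrable_const _), integral_const_mul,
      integral_const] at h3
    simp only [measure_univ, probReal_univ, ENNReal.toReal_one, one_smul, smul_eq_mul, one_mul] at h3
    have h4 := happ P hP
    nlinarith [h3, h4]
  have hηb : ∀ P ∈ 𝒮, ∫ ω, ‖η ω‖ ^ 2 ∂(P : Measure Ω) ≤ Mη2 :=
    hsqb η θη hη.1 hη.2.1 hθη
  have hξb : ∀ P ∈ 𝒮, ∫ ω, ‖ξ ω‖ ^ 2 ∂(P : Measure Ω) ≤ Mξ2 :=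
    hsqb ξ θξ hξ.1 hξ.2.1 hθξ
  -- the perturbed maps
  have hξεmeas : ∀ ε : ℝ, Measurable (fun ω => ξ ω + ε • η ω) := fun ε =>
    hξ.1.add (hη.1.const_smul ε)
  have hpt : ∀ (ε : ℝ) (ω : Ω), ‖ξ ω + ε • η ω‖ ^ 2 ≤ 2 * ‖ξ ω‖ ^ 2 + 2 * ε ^ 2 * ‖η ω‖ ^ 2 := by
    intro ε ω
    have h1 : ‖ξ ω + ε • η ω‖ ≤ ‖ξ ω‖ + |ε| * ‖η ω‖ := by
      refine (norm_add_le _ _).trans ?_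
      rw [norm_smul, Real.norm_eq_abs]
    nlinarith [norm_nonneg (ξ ω), norm_nonneg (η ω), abs_nonneg ε, sq_abs ε,
      sq_nonneg (‖ξ ω‖ - |ε| * ‖η ω‖), norm_nonneg (ξ ω + ε • η ω),
      mul_nonneg (abs_nonneg ε) (norm_nonneg (η ω))]
  have hξεint : ∀ ε : ℝ, ∀ P ∈ 𝒮, Integrable (fun ω => ‖ξ ω + ε • η ω‖ ^ 2) (P : Measure Ω) := by
    intro ε P hP
    refine Integrable.mono' (((hξ.2.1 P hP).const_mul 2).add ((hη.2.1 P hP).const_mul (2 * ε ^ 2)))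
      (((hξεmeas ε).norm.pow_const 2).aestronglyMeasurable) (Eventually.of_forall fun ω => ?_)
    rw [Real.norm_of_nonneg (by positivity)]
    simp only [Pi.add_apply]
    exact hpt ε ω
  -- perturbation bound on f-values
  have hεdiff : ∀ ε : ℝ, 0 < ε → ∀ P : ProbabilityMeasure Ω, P ∈ 𝒮 →
      |f ((P : Measure Ω).map (fun ω => ξ ω + ε • η ω)) - f ((P : Measure Ω).map ξ)| ≤
        C * (ε * Mη) := by
    intro ε hε P hP
    have h := w2_key hf (P : Measure Ω) (hξεmeas ε) hξ.1 (hξεint ε P hP) (hξ.2.1 P hP)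
    refine h.trans ?_
    refine mul_le_mul_of_nonneg_left ?_ hC
    have hintegrand : (fun ω => ‖(ξ ω + ε • η ω) - ξ ω‖ ^ 2) =
        fun ω => ε ^ 2 * ‖η ω‖ ^ 2 := by
      funext ω
      rw [add_sub_cancel_left, norm_smul, Real.norm_eq_abs, mul_pow, sq_abs]
    rw [hintegrand, integral_const_mul, Real.sqrt_mul (sq_nonneg ε), Real.sqrt_sq hε.le]
    refine mul_le_mul_of_nonneg_left ?_ hε.le
    rw [hMηdef]
    exact Real.sqrt_le_sqrt (hηb P hP)
  haveI hne : Nonempty ↥𝒮 := h𝒮ne.to_subtype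
  -- uniform upper bound for f on pushforwards
  have hub : ∀ (ζ : Ω → EuclideanSpace ℝ (Fin k)), Measurable ζ → ∀ K : ℝ,
      (∀ P ∈ 𝒮, ∫ ω, ‖ζ ω‖ ^ 2 ∂(P : Measure Ω) ≤ K) →
      (∀ P ∈ 𝒮, Integrable (fun ω => ‖ζ ω‖ ^ 2) (P : Measure Ω)) →
      ∀ P : ProbabilityMeasure Ω, P ∈ 𝒮 →
        f ((P : Measure Ω).map ζ) ≤ f (Measure.dirac 0) + C * Real.sqrt K := by
    intro ζ hm K hK hint P hP
    have h0 : (P : Measure Ω).map (fun _ : Ω => (0 : EuclideanSpace ℝ (Fin k))) =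
        Measure.dirac 0 := by
      rw [Measure.map_const, measure_univ, one_smul]
    have hzint : Integrable (fun _ : Ω => ‖(0 : EuclideanSpace ℝ (Fin k))‖ ^ 2)
        (P : Measure Ω) := by simpa using (integrable_const (0:ℝ) (μ := (P : Measure Ω)))
    have h := w2_key hf (P : Measure Ω) hm measurable_const (hint P hP) hzint
    rw [h0] at h
    have h2 : f ((P : Measure Ω).map ζ) - f (Measure.dirac 0) ≤
        C * Real.sqrt (∫ ω, ‖ζ ω - 0‖ ^ 2 ∂(P : Measure Ω)) :=
      (le_abs_self _).trans h
    simp only [sub_zero] at h2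
    have h3 : Real.sqrt (∫ ω, ‖ζ ω‖ ^ 2 ∂(P : Measure Ω)) ≤ Real.sqrt K :=
      Real.sqrt_le_sqrt (hK P hP)
    nlinarith [mul_le_mul_of_nonneg_left h3 hC]
  have hbddξ : BddAbove (Set.range fun Q : ↥𝒮 =>
      f (((Q : ProbabilityMeasure Ω) : Measure Ω).map ξ)) := by
    refine ⟨f (Measure.dirac 0) + C * Real.sqrt Mξ2, ?_⟩
    rintro x ⟨Q, rfl⟩
    exact hub ξ hξ.1 Mξ2 hξb hξ.2.1 Q Q.2
  have hξεb : ∀ ε : ℝ, ε ∈ Ioc (0:ℝ) 1 → ∀ P ∈ 𝒮,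
      ∫ ω, ‖ξ ω + ε • η ω‖ ^ 2 ∂(P : Measure Ω) ≤ 2 * Mξ2 + 2 * Mη2 := by
    intro ε hε P hP
    have hgint2 : Integrable (fun ω => 2 * ‖ξ ω‖ ^ 2 + 2 * ε ^ 2 * ‖η ω‖ ^ 2) (P : Measure Ω) :=
      ((hξ.2.1 P hP).const_mul 2).add ((hη.2.1 P hP).const_mul (2 * ε ^ 2))
    have h1 := integral_mono (hξεint ε P hP) hgint2 (fun ω => hpt ε ω)
    rw [integral_add ((hξ.2.1 P hP).const_mul 2) ((hη.2.1 P hP).const_mul (2 * ε ^ 2)),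
      integral_const_mul, integral_const_mul] at h1
    have hε2 : ε ^ 2 ≤ 1 := by nlinarith [hε.1, hε.2]
    have hη0 : 0 ≤ ∫ ω, ‖η ω‖ ^ 2 ∂(P : Measure Ω) :=
      integral_nonneg fun ω => by positivity
    nlinarith [hξb P hP, hηb P hP, hε.1]
  have hbddξε : ∀ ε : ℝ, ε ∈ Ioc (0:ℝ) 1 → BddAbove (Set.range fun Q : ↥𝒮 =>
      f (((Q : ProbabilityMeasure Ω) : Measure Ω).map (fun ω => ξ ω + ε • η ω))) := by
    intro ε hε
    refine ⟨f (Measure.dirac 0) + C * Real.sqrt (2 * Mξ2 + 2 * Mη2), ?_⟩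
    rintro x ⟨Q, rfl⟩
    exact hub _ (hξεmeas ε) _ (hξεb ε hε) (hξεint ε) Q Q.2
  -- sup comparison
  have hFfle : ∀ ε : ℝ, ε ∈ Ioc (0:ℝ) 1 →
      Ff 𝒮 f ξ ≤ Ff 𝒮 f (fun ω => ξ ω + ε • η ω) + C * (ε * Mη) := by
    intro ε hε
    refine ciSup_le fun Q => ?_
    have h1 := hεdiff ε hε.1 Q Q.2
    have h2 : f (((Q : ProbabilityMeasure Ω) : Measure Ω).map ξ) ≤
        f (((Q : ProbabilityMeasure Ω) : Measure Ω).map (fun ω => ξ ω + ε • η ω)) +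
          C * (ε * Mη) := by
      have := abs_le.mp h1
      linarith [this.1, this.2]
    refine h2.trans (add_le_add_left ?_ _)
    exact le_ciSup (hbddξε ε hε) Q
  -- main claim
  have H : ∀ δ0 : ℝ, 0 < δ0 → ∀ᶠ ε in 𝓝[>] (0:ℝ),
      ∀ Q ∈ maximizersF 𝒮 f (fun ω => ξ ω + ε • η ω), ∃ Q' ∈ maximizersF 𝒮 f ξ,
        levyProkhorovDist (Q : Measure Ω) (Q' : Measure Ω) ≤ δ0 := by
    intro δ0 hδ0
    by_contra hcon
    rw [Filter.not_eventually] at hcon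
    have hseq : ∀ n : ℕ, ∃ ε : ℝ, ε ∈ Ioo (0:ℝ) (1/(n+1)) ∧
        ∃ Q ∈ maximizersF 𝒮 f (fun ω => ξ ω + ε • η ω), ∀ Q' ∈ maximizersF 𝒮 f ξ,
          δ0 < levyProkhorovDist (Q : Measure Ω) (Q' : Measure Ω) := by
      intro n
      have hIoo : Ioo (0:ℝ) (1/(n+1)) ∈ 𝓝[>] (0:ℝ) :=
        Ioo_mem_nhdsGT_of_mem ⟨le_refl 0, by positivity⟩
      obtain ⟨ε, hbadε, hIooε⟩ :=
        (hcon.and_eventually (eventually_of_mem hIoo fun x hx => hx)).exists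
      push_neg at hbadε
      exact ⟨ε, hIooε, hbadε⟩
    choose εs hεIoo Qs hQmax hbad using hseq
    have hεpos : ∀ n, 0 < εs n := fun n => (hεIoo n).1
    have hε1 : ∀ n, εs n ≤ 1 := by
      intro n
      have h1 : (1:ℝ)/(n+1) ≤ 1 := by
        rw [div_le_one (by positivity)]
        have : (0:ℝ) ≤ (n:ℝ) := Nat.cast_nonneg n
        linarith
      exact le_of_lt (lt_of_lt_of_le (hεIoo n).2 h1)
    have hεlim : Tendsto εs atTop (𝓝 0) := by
      refine tendsto_of_tendsto_of_tendsto_of_le_of_le tendsto_const_nhds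
        tendsto_one_div_add_atTop_nhds_zero_nat (fun n => (hεpos n).le)
        (fun n => le_of_lt (hεIoo n).2)
    have hQmem : ∀ n, Qs n ∈ 𝒮 := fun n => (hQmax n).1
    obtain ⟨Qinf, hQinfmem, φ, hφmono, hφlim⟩ := h𝒮c.isSeqCompact hQmem
    have hup : ∀ n, f ((Qs n : Measure Ω).map ξ) ≤ Ff 𝒮 f ξ := fun n =>
      le_ciSup hbddξ (⟨Qs n, hQmem n⟩ : ↥𝒮)
    have hlow : ∀ n, Ff 𝒮 f ξ - 2 * (C * (εs n * Mη)) ≤ f ((Qs n : Measure Ω).map ξ) := by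
      intro n
      have h1 := hεdiff (εs n) (hεpos n) (Qs n) (hQmem n)
      have h2 := (hQmax n).2
      have h3 := hFfle (εs n) ⟨hεpos n, hε1 n⟩
      have h5 := (abs_le.mp h1).2
      rw [h2] at h5
      linarith
    have hval : Tendsto (fun j => f ((Qs (φ j) : Measure Ω).map ξ)) atTop (𝓝 (Ff 𝒮 f ξ)) := by
      have hεφ : Tendsto (fun j => εs (φ j)) atTop (𝓝 0) := hεlim.comp hφmono.tendsto_atTop
      have hz : Tendsto (fun j => 2 * (C * (εs (φ j) * Mη))) atTop (𝓝 0) := by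
        have := ((hεφ.mul_const Mη).const_mul C).const_mul 2
        simpa using this
      have hlbtend : Tendsto (fun j => Ff 𝒮 f ξ - 2 * (C * (εs (φ j) * Mη))) atTop
          (𝓝 (Ff 𝒮 f ξ)) := by
        simpa using (tendsto_const_nhds (x := Ff 𝒮 f ξ) (f := atTop)).sub hz
      exact tendsto_of_tendsto_of_tendsto_of_le_of_le hlbtend tendsto_const_nhds
        (fun j => hlow (φ j)) (fun j => hup (φ j))
    have hcont := cont_along hC hf hξ (fun j => hQmem (φ j)) hQinfmem hφlim
    have hQinfmax : Qinf ∈ maximizersF 𝒮 f ξ := ⟨hQinfmem, tendsto_nhds_unique hcont hval⟩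
    have hLP : Tendsto (fun j => levyProkhorovDist ((Qs (φ j)) : Measure Ω)
        (Qinf : Measure Ω)) atTop (𝓝 0) := by
      have hcontL := (LevyProkhorov.probabilityMeasureHomeomorph (Ω := Ω)).continuous.tendsto Qinf
      have h2 := hcontL.comp hφlim
      have h3 := tendsto_iff_dist_tendsto_zero.mp h2
      exact h3
    obtain ⟨j, hj⟩ := (hLP.eventually_le_const hδ0).exists
    exact absurd hj (not_le.mpr (hbad (φ j) Qinf hQinfmax))
  -- conclusion
  rw [Metric.tendsto_nhds]
  intro δ0 hδ0
  filter_upwards [H (δ0/2) (by positivity)] with ε hε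
  have hLPnn : ∀ μ ν : Measure Ω, 0 ≤ levyProkhorovDist μ ν := fun μ ν => ENNReal.toReal_nonneg
  have h1 : 0 ≤ GammaDist (maximizersF 𝒮 f (fun ω => ξ ω + ε • η ω)) (maximizersF 𝒮 f ξ) :=
    Real.iSup_nonneg fun Q => Real.iInf_nonneg fun Q' => hLPnn _ _
  have h2 : GammaDist (maximizersF 𝒮 f (fun ω => ξ ω + ε • η ω)) (maximizersF 𝒮 f ξ) ≤
      δ0/2 := by
    refine Real.iSup_le (fun Q => ?_) (by positivity)
    obtain ⟨Q', hQ', hd⟩ := hε Q Q.2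
    refine ciInf_le_of_le ?_ (⟨Q', hQ'⟩ : ↥(maximizersF 𝒮 f ξ)) hd
    refine ⟨0, ?_⟩
    rintro x ⟨Q'', rfl⟩
    exact hLPnn _ _
  rw [Real.dist_eq, sub_zero, abs_of_nonneg h1]
  linarith
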